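/- For any essentially bounded measurable f, the essential supremum over the set C of (𝓜, μ)-uniform N-tuples of |(1/N)·∑_{n=1}^N f(x_n) − ∫_X f dμ| is at most ∑_{j=1}^k μ(M_j)·(G_j(f) − g_j(f)). -/

import Mathlib

/-!
Almost every point of a cell `M_j` has `g_j(f) ≤ f ≤ G_j(f)`, so both the cell's share
`∫_{M_j} f dμ` of the integral and its share `(1/N) ∑_{x_n ∈ M_j} f(x_n)` of the average lie in
`[μ(M_j) g_j(f), μ(M_j) G_j(f)]`: the latter because a uniform tuple puts exactly
`μ(M_j) N` of its points in `M_j`, and almost every tuple has all its points outside the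
exceptional null sets.
Two points of an interval differ by at most its length; summing over the cells gives the bound.
-/

open MeasureTheory

/-- `Gj μ f M` is the essential upper bound `G_j(f)` of `f` on `M`:
`-inf_{x∈M} f⁻` if `f⁺ = 0` μ-a.e. on `M`, and `esssup_{M} f⁺` otherwise. -/
noncomputable def Gj {X : Type*} [MeasurableSpace X] (μ : Measure X)
    (f : X → ℝ) (M : Set X) : ℝ :=
  if μ {x | x ∈ M ∧ 0 < max (f x) 0} = 0 then
    -(sInf ((fun x => max (-(f x)) 0) '' M))
  else essSup (fun x => max (f x) 0) (μ.restrict M)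

/-- `gj μ f M` is the essential lower bound `g_j(f)` of `f` on `M`:
`inf_{x∈M} f⁺` if `f⁻ = 0` μ-a.e. on `M`, and `-esssup_{M} f⁻` otherwise. -/
noncomputable def gj {X : Type*} [MeasurableSpace X] (μ : Measure X)
    (f : X → ℝ) (M : Set X) : ℝ :=
  if μ {x | x ∈ M ∧ 0 < max (-(f x)) 0} = 0 then
    sInf ((fun x => max (f x) 0) '' M)
  else -(essSup (fun x => max (-(f x)) 0) (μ.restrict M))

open Filter Set

theorem sum_indicator_mem_Icc {X ι : Type*} {f : X → ℝ} {M : Set X} (s : Finset ι) (y : ι → X)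
    {a b : ℝ} (h : ∀ n ∈ s, y n ∈ M → f (y n) ∈ Icc a b) :
    ∑ n ∈ s, M.indicator f (y n) ∈ Icc (a * ∑ n ∈ s, M.indicator (fun _ => (1 : ℝ)) (y n))
      (b * ∑ n ∈ s, M.indicator (fun _ => (1 : ℝ)) (y n)) := by
  have hpt : ∀ n ∈ s, a * M.indicator (fun _ => 1) (y n) ≤ M.indicator f (y n) ∧
      M.indicator f (y n) ≤ b * M.indicator (fun _ => 1) (y n) := by
    intro n hn
    by_cases hy : y n ∈ M
    · simpa [hy] using h n hn hy
    · simp [hy]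
  rw [Finset.mul_sum, Finset.mul_sum]
  exact ⟨Finset.sum_le_sum fun n hn => (hpt n hn).1, Finset.sum_le_sum fun n hn => (hpt n hn).2⟩

section Partition

variable {X : Type*} {κ : Type*} [Fintype κ] {M : κ → Set X}

theorem sum_indicator_eq_of_partition (hdisj : Pairwise (Function.onFun Disjoint M))
    (hcover : ⋃ j, M j = univ) (f : X → ℝ) (t : X) :
    ∑ j, (M j).indicator f t = f t := by
  rw [← Finset.indicator_biUnion_apply _ _ (hdisj.set_pairwise _)]
  simp [hcover]

theorem sum_eq_sum_sum_indicator_of_partition (hdisj : Pairwise (Function.onFun Disjoint M))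
    (hcover : ⋃ j, M j = univ) (f : X → ℝ) {ι : Type*} (s : Finset ι) (y : ι → X) :
    ∑ n ∈ s, f (y n) = ∑ j, ∑ n ∈ s, (M j).indicator f (y n) := by
  rw [Finset.sum_comm]
  simp only [sum_indicator_eq_of_partition hdisj hcover]

end Partition

section LocalBounds

variable {X : Type*} [MeasurableSpace X] {μ : Measure X} {f : X → ℝ} {M : Set X}

theorem ae_le_Gj (hf : IsBoundedUnder (· ≤ ·) (ae μ) f) :
    ∀ᵐ t ∂μ, t ∈ M → f t ≤ Gj μ f M := by
  unfold Gj
  split_ifs with hpos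
  · have hbdd : BddBelow ((fun x => max (-(f x)) 0) '' M) :=
      ⟨0, by rintro _ ⟨x, -, rfl⟩; exact le_max_right _ _⟩
    filter_upwards [measure_eq_zero_iff_ae_notMem.mp hpos] with t ht htM
    have hft : f t ≤ 0 := by
      by_contra! h
      exact ht ⟨htM, lt_max_of_lt_left h⟩
    have hinf := csInf_le hbdd (mem_image_of_mem _ htM)
    rw [max_eq_left (neg_nonneg.mpr hft)] at hinf
    linarith
  · refine ae_imp_of_ae_restrict ?_
    have hb : IsBoundedUnder (· ≤ ·) (ae (μ.restrict M)) fun t => max (f t) 0 :=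
      (hf.mono ae_restrict_le).sup isBoundedUnder_const
    filter_upwards [ae_le_essSup hb] with t ht
    exact (le_max_left _ _).trans ht

theorem gj_eq_neg_Gj_neg : gj μ f M = -Gj μ (fun x => -f x) M := by
  simp only [gj, Gj, neg_neg]
  split_ifs <;> simp only [neg_neg]

theorem ae_gj_le (hf : IsBoundedUnder (· ≥ ·) (ae μ) f) :
    ∀ᵐ t ∂μ, t ∈ M → gj μ f M ≤ f t := by
  filter_upwards [ae_le_Gj (M := M) (isBoundedUnder_le_neg.mpr hf)] with t ht htM
  rw [gj_eq_neg_Gj_neg]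
  linarith [ht htM]

theorem ae_mem_Icc_gj_Gj (hf : MemLp f ⊤ μ) :
    ∀ᵐ t ∂μ, t ∈ M → f t ∈ Icc (gj μ f M) (Gj μ f M) := by
  have hbdd := ae_le_lpNorm_exponent_top hf
  have hle : IsBoundedUnder (· ≤ ·) (ae μ) f :=
    isBoundedUnder_of_eventually_le (hbdd.mono fun t ht => (Real.le_norm_self _).trans ht)
  have hge : IsBoundedUnder (· ≥ ·) (ae μ) f :=
    isBoundedUnder_of_eventually_ge (hbdd.mono fun t ht => neg_le_of_abs_le ht)
  filter_upwards [ae_gj_le (M := M) hge, ae_le_Gj (M := M) hle] with t hlow hup htM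
  exact ⟨hlow htM, hup htM⟩

theorem setIntegral_mem_Icc_of_ae_mem_Icc [IsFiniteMeasure μ] (hfM : IntegrableOn f M μ)
    {a b : ℝ} (h : ∀ᵐ t ∂μ.restrict M, f t ∈ Icc a b) :
    ∫ t in M, f t ∂μ ∈ Icc ((μ M).toReal * a) ((μ M).toReal * b) := by
  constructor
  · simpa [measureReal_def] using
      integral_mono_ae (integrable_const a) hfM (h.mono fun t ht => ht.1)
  · simpa [measureReal_def] using
      integral_mono_ae hfM (integrable_const b) (h.mono fun t ht => ht.2)

theorem abs_average_indicator_sub_setIntegral_le [IsFiniteMeasure μ] (hfM : IntegrableOn f M μ)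
    {a b : ℝ} (hae : ∀ᵐ t ∂μ.restrict M, f t ∈ Icc a b) {N : ℕ} (hN : 0 < N) (y : Fin N → X)
    (hy : ∀ n, y n ∈ M → f (y n) ∈ Icc a b)
    (hcount : ∑ n, M.indicator (fun _ => (1 : ℝ)) (y n) = (μ M).toReal * N) :
    |(1 / (N : ℝ)) * ∑ n, M.indicator f (y n) - ∫ t in M, f t ∂μ| ≤ (μ M).toReal * (b - a) := by
  have hNpos : (0 : ℝ) < N := Nat.cast_pos.mpr hN
  have hsum := sum_indicator_mem_Icc Finset.univ y fun n _ => hy n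
  rw [hcount] at hsum
  have hscale : ∀ c : ℝ, 1 / (N : ℝ) * (c * ((μ M).toReal * N)) = (μ M).toReal * c := by
    intro c
    field_simp
  have havg : (1 / (N : ℝ)) * ∑ n, M.indicator f (y n) ∈
      Icc ((μ M).toReal * a) ((μ M).toReal * b) := by
    rw [← hscale a, ← hscale b]
    exact ⟨by gcongr; exact hsum.1, by gcongr; exact hsum.2⟩
  have hint := setIntegral_mem_Icc_of_ae_mem_Icc hfM hae
  rw [mul_sub]
  exact abs_sub_le_of_le_of_le havg.1 havg.2 hint.1 hint.2

end LocalBounds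

theorem ae_pi_forall_apply_of_ae {X ι : Type*} [MeasurableSpace X] [Fintype ι] {μ : Measure X}
    [SigmaFinite μ] {p : X → Prop} (h : ∀ᵐ t ∂μ, p t) :
    ∀ᵐ x ∂Measure.pi (fun _ : ι => μ), ∀ n, p (x n) :=
  ae_all_iff.2 fun _ => Measure.tendsto_eval_ae_ae.eventually h

theorem measurableSet_setOf_forall_sum_indicator_eq {X ι κ : Type*} [MeasurableSpace X]
    [Fintype ι] [Countable κ] {M : κ → Set X} (hM : ∀ j, MeasurableSet (M j)) (c : κ → ℝ) :
    MeasurableSet {x : ι → X | ∀ j, ∑ n, (M j).indicator (fun _ => (1 : ℝ)) (x n) = c j} := by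
  rw [ofPred_forall]
  refine MeasurableSet.iInter fun j => measurableSet_eq_fun ?_ measurable_const
  exact Finset.measurable_sum _ fun n _ =>
    (measurable_const.indicator (hM j)).comp (measurable_pi_apply n)

theorem quasiMonteCarlo_error_le_sum_local_spread_general
    {X : Type*} [MeasurableSpace X] (μ : Measure X) [IsProbabilityMeasure μ]
    (k : ℕ) (M : Fin k → Set X)
    (hMmeas : ∀ j, MeasurableSet (M j))
    (hMdisj : Pairwise (Function.onFun Disjoint M))
    (hMcover : ⋃ j, M j = Set.univ)
    (N : ℕ) (hN : 0 < N)
    (C : Set (Fin N → X))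
    (hC : C = {x : Fin N → X | ∀ j : Fin k,
      ∑ n : Fin N, Set.indicator (M j) (fun _ => (1 : ℝ)) (x n) = (μ (M j)).toReal * N})
    (f : X → ℝ) (hf : MemLp f ⊤ μ) :
    ∀ᵐ x ∂((Measure.pi (fun _ : Fin N => μ)).restrict C),
      |(1 / (N : ℝ)) * ∑ n : Fin N, f (x n) - ∫ t, f t ∂μ|
        ≤ ∑ j : Fin k, (μ (M j)).toReal * (Gj μ f (M j) - gj μ f (M j)) := by
  subst hC
  have hInt : Integrable f μ := hf.integrable le_top
  have hgood : ∀ᵐ t ∂μ, ∀ j, t ∈ M j → f t ∈ Icc (gj μ f (M j)) (Gj μ f (M j)) :=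
    ae_all_iff.2 fun j => ae_mem_Icc_gj_Gj hf
  filter_upwards [ae_restrict_of_ae (ae_pi_forall_apply_of_ae hgood),
    ae_restrict_mem (measurableSet_setOf_forall_sum_indicator_eq hMmeas _)] with x hx hxC
  have hsplit : ∫ t, f t ∂μ = ∑ j, ∫ t in M j, f t ∂μ := by
    rw [← integral_iUnion_fintype hMmeas hMdisj fun j => hInt.integrableOn, hMcover,
      setIntegral_univ]
  rw [sum_eq_sum_sum_indicator_of_partition hMdisj hMcover, hsplit, Finset.mul_sum,
    ← Finset.sum_sub_distrib]
  refine (Finset.abs_sum_le_sum_abs _ _).trans (Finset.sum_le_sum fun j _ => ?_)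
  exact abs_average_indicator_sub_setIntegral_le hInt.integrableOn
    ((ae_restrict_iff' (hMmeas j)).2 (hgood.mono fun t ht => ht j)) hN x
    (fun n => hx n j) (hxC j)

/-- Corollary 2 of the paper: For f ∈ L^∞, the essential supremum over the
set C of (𝓜, μ)-uniform tuples of the integration error is at most
∑_j μ(M_j)·(G_j(f) − g_j(f)), stated as an a.e. bound. -/
theorem quasiMonteCarlo_error_le_sum_local_spread
    {X : Type*} [MeasurableSpace X] (μ : Measure X) [IsProbabilityMeasure μ]
    (k : ℕ) (hk : 0 < k) (M : Fin k → Set X)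
    (hMmeas : ∀ j, MeasurableSet (M j))
    (hMdisj : Pairwise (Function.onFun Disjoint M))
    (hMcover : ⋃ j, M j = Set.univ)
    (N : ℕ) (hN : 0 < N)
    (C : Set (Fin N → X))
    (hC : C = {x : Fin N → X | ∀ j : Fin k,
      ∑ n : Fin N, Set.indicator (M j) (fun _ => (1 : ℝ)) (x n) = (μ (M j)).toReal * N})
    (f : X → ℝ) (hf : MemLp f ⊤ μ) :
    ∀ᵐ x ∂((Measure.pi (fun _ : Fin N => μ)).restrict C),
      |(1 / (N : ℝ)) * ∑ n : Fin N, f (x n) - ∫ t, f t ∂μ|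
        ≤ ∑ j : Fin k, (μ (M j)).toReal * (Gj μ f (M j) - gj μ f (M j)) :=
  quasiMonteCarlo_error_le_sum_local_spread_general μ k M hMmeas hMdisj hMcover N hN C hC f hf
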